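/- Let B = (b_{i1...im}) be a symmetric double B-tensor of order m ≥ 2 and dimension n ≥ 2. Then either B is itself a Z-tensor, or there exist a positive integer s, positive reals h_1,...,h_s, subsets Ĵ_1,...,Ĵ_s of {1,...,n}, and a symmetric Z-tensor M which is a double B-tensor, such that B = M + Σ_{k=1}^{s} h_k ε^{Ĵ_k}. -/

import Mathlib

open Finset

/-- The set of index tuples `(i, i₂, …, i_m)` in row `i` of an order-`m`, dimension-`n`
tensor, i.e. all tuples whose first index is `i`. -/
def rowSet (m n : ℕ) (i : Fin n) : Finset (Fin m → Fin n) :=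
  Finset.univ.filter fun α => ∀ t : Fin m, (t : ℕ) = 0 → α t = i

/-- The set of off-diagonal index tuples in row `i`: tuples whose first index is `i`
and whose indices are not all equal to `i` (i.e. `δ_{i i₂ … i_m} = 0`). -/
def offRowSet (m n : ℕ) (i : Fin n) : Finset (Fin m → Fin n) :=
  Finset.univ.filter fun α => (∀ t : Fin m, (t : ℕ) = 0 → α t = i) ∧ α ≠ fun _ => i

/-- The diagonal entry `b_{i…i}`. -/
def diagEntry {m n : ℕ} (B : (Fin m → Fin n) → ℝ) (i : Fin n) : ℝ :=
  B fun _ => i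

/-- `β_i(B) = max {0, b_{i j₂ ⋯ j_m} : δ_{i j₂ … j_m} = 0}`. -/
def betaMax {m n : ℕ} (B : (Fin m → Fin n) → ℝ) (i : Fin n) : ℝ :=
  (offRowSet m n i).fold max 0 B

/-- `Δ_i(B) = Σ_{δ_{i i₂…i_m} = 0} (β_i(B) - b_{i i₂ ⋯ i_m})`. -/
def DeltaSum {m n : ℕ} (B : (Fin m → Fin n) → ℝ) (i : Fin n) : ℝ :=
  ∑ α ∈ offRowSet m n i, (betaMax B i - B α)

/-- `r_i(B) = Σ_{δ_{i i₂…i_m} = 0} |b_{i i₂ ⋯ i_m}|`. -/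
def rowAbsSum {m n : ℕ} (B : (Fin m → Fin n) → ℝ) (i : Fin n) : ℝ :=
  ∑ α ∈ offRowSet m n i, |B α|

/-- The index tuple `(j, i, i, …, i)`. -/
def spike (m n : ℕ) (j i : Fin n) : Fin m → Fin n :=
  fun t => if (t : ℕ) = 0 then j else i

/-- `Δ_j^i(B) = Δ_j(B) - (β_j(B) - b_{j i⋯i})`. -/
def DeltaSubSum {m n : ℕ} (B : (Fin m → Fin n) → ℝ) (j i : Fin n) : ℝ :=
  DeltaSum B j - (betaMax B j - B (spike m n j i))

/-- `r_j^i(B) = r_j(B) - |b_{j i⋯i}|`. -/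
def rowAbsSubSum {m n : ℕ} (B : (Fin m → Fin n) → ℝ) (j i : Fin n) : ℝ :=
  rowAbsSum B j - |B (spike m n j i)|

/-- `B` is a B-tensor: each row sum is positive and `(1/n^{m-1})` times the row sum
strictly dominates every off-diagonal entry of that row. -/
def IsBTensor {m n : ℕ} (B : (Fin m → Fin n) → ℝ) : Prop :=
  ∀ i : Fin n,
    0 < ∑ α ∈ rowSet m n i, B α ∧
    ∀ α ∈ offRowSet m n i,
      B α < (1 / (n : ℝ) ^ (m - 1)) * ∑ α' ∈ rowSet m n i, B α'

/-- `B` is a double B-tensor. -/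
def IsDoubleBTensor {m n : ℕ} (B : (Fin m → Fin n) → ℝ) : Prop :=
  (∀ i, betaMax B i < diagEntry B i) ∧
  (∀ i, DeltaSum B i ≤ diagEntry B i - betaMax B i) ∧
  (∀ i j, i ≠ j →
    DeltaSum B i * DeltaSum B j <
      (diagEntry B i - betaMax B i) * (diagEntry B j - betaMax B j))

/-- `B` is a quasi-double B-tensor. -/
def IsQuasiDoubleBTensor {m n : ℕ} (B : (Fin m → Fin n) → ℝ) : Prop :=
  (∀ i, betaMax B i < diagEntry B i) ∧
  ∀ i j, i ≠ j →
    (betaMax B j - B (spike m n j i)) * DeltaSum B i <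
      (diagEntry B i - betaMax B i) *
        (diagEntry B j - betaMax B j - DeltaSubSum B j i)

/-- `B` is a Z-tensor: all off-diagonal entries are non-positive. -/
def IsZTensor {m n : ℕ} (B : (Fin m → Fin n) → ℝ) : Prop :=
  ∀ α : Fin m → Fin n, (∃ s t, α s ≠ α t) → B α ≤ 0

/-- `B` is a symmetric tensor: invariant under permutations of the indices. -/
def IsSymmetricTensor {m n : ℕ} (B : (Fin m → Fin n) → ℝ) : Prop :=
  ∀ (σ : Equiv.Perm (Fin m)) (α : Fin m → Fin n), B (α ∘ σ) = B α

/-- `B` is doubly strictly diagonally dominant (for order `m > 2`). -/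
def IsDSDD {m n : ℕ} (B : (Fin m → Fin n) → ℝ) : Prop :=
  (∀ i, rowAbsSum B i ≤ |diagEntry B i|) ∧
  (∀ i j, i ≠ j → rowAbsSum B i * rowAbsSum B j < |diagEntry B i| * |diagEntry B j|)

/-- `B` is quasi-doubly strictly diagonally dominant. -/
def IsQDSDD {m n : ℕ} (B : (Fin m → Fin n) → ℝ) : Prop :=
  ∀ i j, i ≠ j →
    rowAbsSum B i * |B (spike m n j i)| <
      |diagEntry B i| * (|diagEntry B j| - rowAbsSubSum B j i)

/-- `B x^m = Σ b_{i₁⋯i_m} x_{i₁} ⋯ x_{i_m}`. -/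
def tensorApply {m n : ℕ} (B : (Fin m → Fin n) → ℝ) (x : Fin n → ℝ) : ℝ :=
  ∑ α : Fin m → Fin n, B α * ∏ t, x (α t)

/-- `B` is positive definite: `B x^m > 0` for every nonzero `x ∈ ℝ^n`. -/
def IsPosDefTensor {m n : ℕ} (B : (Fin m → Fin n) → ℝ) : Prop :=
  ∀ x : Fin n → ℝ, x ≠ 0 → 0 < tensorApply B x

/-- `(B x^{m-1})_i = Σ_{i₂,…,i_m} b_{i i₂ ⋯ i_m} x_{i₂} ⋯ x_{i_m}`. -/
def rowApply {m n : ℕ} (B : (Fin m → Fin n) → ℝ) (x : Fin n → ℝ) (i : Fin n) : ℝ :=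
  ∑ α ∈ rowSet m n i, B α * ∏ t ∈ Finset.univ.filter (fun t : Fin m => (t : ℕ) ≠ 0), x (α t)

/-- `B` is a P-tensor: for every nonzero `x`, `max_i x_i (B x^{m-1})_i > 0`. -/
def IsPTensor {m n : ℕ} (B : (Fin m → Fin n) → ℝ) : Prop :=
  ∀ x : Fin n → ℝ, x ≠ 0 → ∃ i, 0 < x i * rowApply B x i

/-- `lam` is an H-eigenvalue of `B`. -/
def IsHEigenvalue {m n : ℕ} (B : (Fin m → Fin n) → ℝ) (lam : ℝ) : Prop :=
  ∃ x : Fin n → ℝ, x ≠ 0 ∧ ∀ i, rowApply B x i = lam * x i ^ (m - 1)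

/-- The partially all one tensor `ε^J`: entry `1` if all indices lie in `J`, else `0`. -/
def epsTensor (m n : ℕ) (J : Finset (Fin n)) : (Fin m → Fin n) → ℝ :=
  fun α => if ∀ t, α t ∈ J then 1 else 0

section Aux

variable {m n : ℕ}

/-- Fold of max over a finset with base 0 is either 0 or attained. -/
lemma fold_max_eq_zero_or_mem {β : Type*} [DecidableEq β] (s : Finset β) (f : β → ℝ) :
    s.fold max 0 f = 0 ∨ ∃ a ∈ s, s.fold max 0 f = f a := by
  classical
  induction s using Finset.induction_on with
  | empty => exact Or.inl rfl
  | insert _ _ h ih =>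
    rw [Finset.fold_insert h]
    rcases max_choice (f _) (Finset.fold max 0 f _) with h1 | h1
    · exact Or.inr ⟨_, Finset.mem_insert_self _ _, h1⟩
    · rw [h1]
      rcases ih with h2 | ⟨a, ha, h2⟩
      · exact Or.inl h2
      · exact Or.inr ⟨a, Finset.mem_insert_of_mem ha, h2⟩

lemma mem_offRowSet_iff (hm : 0 < m) (i : Fin n) (α : Fin m → Fin n) :
    α ∈ offRowSet m n i ↔ (α ⟨0, hm⟩ = i ∧ α ≠ fun _ => i) := by
  simp only [offRowSet, Finset.mem_filter, Finset.mem_univ, true_and]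
  constructor
  · rintro ⟨h1, h2⟩; exact ⟨h1 ⟨0, hm⟩ rfl, h2⟩
  · rintro ⟨h1, h2⟩
    refine ⟨fun t ht => ?_, h2⟩
    have : t = ⟨0, hm⟩ := Fin.ext ht
    rwa [this]

lemma betaMax_nonneg (B : (Fin m → Fin n) → ℝ) (i : Fin n) : 0 ≤ betaMax B i :=
  (Finset.le_fold_max 0).mpr (Or.inl le_rfl)

lemma le_betaMax (B : (Fin m → Fin n) → ℝ) (i : Fin n) {α : Fin m → Fin n}
    (hα : α ∈ offRowSet m n i) : B α ≤ betaMax B i :=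
  (Finset.le_fold_max (B α)).mpr (Or.inr ⟨α, hα, le_rfl⟩)

lemma DeltaSum_nonneg (B : (Fin m → Fin n) → ℝ) (i : Fin n) : 0 ≤ DeltaSum B i :=
  Finset.sum_nonneg fun α hα => sub_nonneg.mpr (le_betaMax B i hα)

/-- Nonconstancy of off-row tuples. -/
lemma offRowSet_nonconst (hm : 0 < m) {i : Fin n} {α : Fin m → Fin n}
    (hα : α ∈ offRowSet m n i) : ∃ s t, α s ≠ α t := by
  rw [mem_offRowSet_iff hm] at hα
  obtain ⟨h1, h2⟩ := hα
  have : ∃ t, α t ≠ i := by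
    by_contra hc
    push_neg at hc
    exact h2 (funext hc)
  obtain ⟨t, ht⟩ := this
  exact ⟨t, ⟨0, hm⟩, by rw [h1]; exact ht⟩

/-- The set of indices with positive `β`. -/
noncomputable def Jset (B : (Fin m → Fin n) → ℝ) : Finset (Fin n) :=
  Finset.univ.filter fun i => 0 < betaMax B i

/-- For symmetric `B`, any nonconstant tuple with positive entry has all indices in `Jset B`. -/
lemma pos_entry_mem_Jset (hm : 0 < m) {B : (Fin m → Fin n) → ℝ}
    (hsym : IsSymmetricTensor B) {α : Fin m → Fin n} (hnc : ∃ s t, α s ≠ α t)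
    (hpos : 0 < B α) (t : Fin m) : α t ∈ Jset B := by
  classical
  set z : Fin m := ⟨0, hm⟩
  set σ : Equiv.Perm (Fin m) := Equiv.swap z t
  have hβmem : (α ∘ σ) ∈ offRowSet m n (α t) := by
    rw [mem_offRowSet_iff hm]
    constructor
    · show α (σ z) = α t
      simp [σ, Equiv.swap_apply_left]
    · intro hc
      obtain ⟨s₁, t₁, hst⟩ := hnc
      apply hst
      have h1 : α s₁ = α t := by
        have := congrFun hc (σ s₁)
        simpa [σ, Function.comp, Equiv.swap_apply_self] using this
      have h2 : α t₁ = α t := by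
        have := congrFun hc (σ t₁)
        simpa [σ, Function.comp, Equiv.swap_apply_self] using this
      rw [h1, h2]
  have hBeq : B (α ∘ σ) = B α := hsym σ α
  have : 0 < betaMax B (α t) := lt_of_lt_of_le (hBeq ▸ hpos) (le_betaMax B (α t) hβmem)
  simp [Jset, this]

/-- If `Jset B = ∅` then `B` is a Z-tensor. -/
lemma z_of_Jset_empty (hm : 0 < m) {B : (Fin m → Fin n) → ℝ}
    (hJ : Jset B = ∅) : IsZTensor B := by
  intro α hnc
  set z : Fin m := ⟨0, hm⟩
  have hmem : α ∈ offRowSet m n (α z) := by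
    rw [mem_offRowSet_iff hm]
    refine ⟨rfl, fun hc => ?_⟩
    obtain ⟨s, t, hst⟩ := hnc
    apply hst
    rw [congrFun hc s, congrFun hc t]
  have h1 : betaMax B (α z) ≤ 0 := by
    by_contra hc
    push_neg at hc
    have : α z ∈ Jset B := by simp [Jset, hc]
    simp [hJ] at this
  exact le_trans (le_betaMax B (α z) hmem) h1

end Aux

section Main

variable {m n : ℕ}

lemma epsTensor_symm (J : Finset (Fin n)) (σ : Equiv.Perm (Fin m)) (α : Fin m → Fin n) :
    epsTensor m n J (α ∘ σ) = epsTensor m n J α := by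
  unfold epsTensor
  congr 1
  simp only [eq_iff_iff]
  constructor
  · intro h t
    have := h (σ.symm t)
    simpa using this
  · intro h t
    exact h (σ t)

lemma step (hm : 0 < m) {B : (Fin m → Fin n) → ℝ}
    (hsym : IsSymmetricTensor B) (hB : IsDoubleBTensor B) (hne : (Jset B).Nonempty) :
    ∃ hv : ℝ, 0 < hv ∧
      IsSymmetricTensor (fun α => B α - hv * epsTensor m n (Jset B) α) ∧
      IsDoubleBTensor (fun α => B α - hv * epsTensor m n (Jset B) α) ∧
      (Jset (fun α => B α - hv * epsTensor m n (Jset B) α)).card < (Jset B).card := by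
  classical
  set J : Finset (Fin n) := Jset B with hJdef
  set hv : ℝ := J.inf' hne (betaMax B) with hvdef
  set B₁ : (Fin m → Fin n) → ℝ := fun α => B α - hv * epsTensor m n J α with hB₁def
  have hJmem : ∀ i, i ∈ J ↔ 0 < betaMax B i := by
    intro i; simp [hJdef, Jset]
  have hvpos : 0 < hv := by
    rw [hvdef, Finset.lt_inf'_iff]
    exact fun i hi => (hJmem i).mp hi
  have hvle : ∀ i ∈ J, hv ≤ betaMax B i := fun i hi => Finset.inf'_le _ hi
  -- entries outside J are unchanged, and nonconstant entries not all in J are ≤ 0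
  have heps0 : ∀ α : Fin m → Fin n, ¬ (∀ t, α t ∈ J) → B₁ α = B α := by
    intro α hα
    simp [hB₁def, epsTensor, hα]
  have heps1 : ∀ α : Fin m → Fin n, (∀ t, α t ∈ J) → B₁ α = B α - hv := by
    intro α hα
    simp [hB₁def, epsTensor, hα]
  have hneg : ∀ α : Fin m → Fin n, (∃ s t, α s ≠ α t) → ¬ (∀ t, α t ∈ J) → B α ≤ 0 := by
    intro α hnc hα
    by_contra hc
    push_neg at hc
    exact hα fun t => pos_entry_mem_Jset hm hsym hnc hc t
  have hrow_nonJ : ∀ i ∉ J, ∀ α ∈ offRowSet m n i, B₁ α = B α := by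
    intro i hi α hα
    apply heps0
    intro hc
    have h0 : α ⟨0, hm⟩ = i := ((mem_offRowSet_iff hm i α).mp hα).1
    exact hi (h0 ▸ hc ⟨0, hm⟩)
  -- betaMax computations
  have hbeta_nonJ : ∀ i ∉ J, betaMax B₁ i = betaMax B i := by
    intro i hi
    exact Finset.fold_congr (hrow_nonJ i hi)
  have hbeta_J : ∀ i ∈ J, betaMax B₁ i = betaMax B i - hv := by
    intro i hi
    have hβpos : 0 < betaMax B i := (hJmem i).mp hi
    have hub : betaMax B₁ i ≤ betaMax B i - hv := by
      apply (Finset.fold_max_le _).mpr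
      refine ⟨sub_nonneg.mpr (hvle i hi), fun α hα => ?_⟩
      by_cases hP : ∀ t, α t ∈ J
      · rw [heps1 α hP]
        exact sub_le_sub_right (le_betaMax B i hα) hv
      · rw [heps0 α hP]
        exact le_trans (hneg α (offRowSet_nonconst hm hα) hP)
          (sub_nonneg.mpr (hvle i hi))
    have hlb : betaMax B i - hv ≤ betaMax B₁ i := by
      rcases fold_max_eq_zero_or_mem (offRowSet m n i) B with h0 | ⟨α, hα, hEq⟩
      · exfalso; rw [betaMax] at hβpos; rw [h0] at hβpos; exact lt_irrefl 0 hβpos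
      · have hBα : B α = betaMax B i := hEq.symm
        have hαpos : 0 < B α := hBα ▸ hβpos
        have hP : ∀ t, α t ∈ J := fun t =>
          pos_entry_mem_Jset hm hsym (offRowSet_nonconst hm hα) hαpos t
        have : B₁ α = betaMax B i - hv := by rw [heps1 α hP, hBα]
        calc betaMax B i - hv = B₁ α := this.symm
          _ ≤ betaMax B₁ i := le_betaMax B₁ i hα
    linarith
  -- diagonal entries
  have hdiag_J : ∀ i ∈ J, diagEntry B₁ i = diagEntry B i - hv := by
    intro i hi
    exact heps1 (fun _ => i) (fun _ => hi)
  have hdiag_nonJ : ∀ i ∉ J, diagEntry B₁ i = diagEntry B i := by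
    intro i hi
    exact heps0 (fun _ => i) (fun hc => hi (hc ⟨0, hm⟩))
  have hgap : ∀ i, diagEntry B₁ i - betaMax B₁ i = diagEntry B i - betaMax B i := by
    intro i
    by_cases hi : i ∈ J
    · rw [hdiag_J i hi, hbeta_J i hi]; ring
    · rw [hdiag_nonJ i hi, hbeta_nonJ i hi]
  -- Delta sums
  have hDelta : ∀ i, DeltaSum B₁ i ≤ DeltaSum B i := by
    intro i
    by_cases hi : i ∈ J
    · apply Finset.sum_le_sum
      intro α hα
      rw [hbeta_J i hi]
      by_cases hP : ∀ t, α t ∈ J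
      · rw [heps1 α hP]; ring_nf; exact le_rfl
      · rw [heps0 α hP]
        have := hvpos
        linarith
    · apply le_of_eq
      apply Finset.sum_congr rfl
      intro α hα
      rw [hbeta_nonJ i hi, hrow_nonJ i hi α hα]
  refine ⟨hv, hvpos, ?_, ?_, ?_⟩
  · intro σ α
    simp only
    rw [hsym σ α, epsTensor_symm]
  · obtain ⟨hb1, hb2, hb3⟩ := hB
    refine ⟨?_, ?_, ?_⟩
    · intro i
      have := hgap i
      have := hb1 i
      linarith
    · intro i
      have := hgap i
      have := hb2 i
      have := hDelta i
      linarith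
    · intro i j hij
      have h1 := hgap i
      have h2 := hgap j
      have h3 := hb3 i j hij
      calc DeltaSum B₁ i * DeltaSum B₁ j
          ≤ DeltaSum B i * DeltaSum B j :=
            mul_le_mul (hDelta i) (hDelta j) (DeltaSum_nonneg B₁ j)
              (le_trans (DeltaSum_nonneg B₁ i) (hDelta i))
        _ < (diagEntry B i - betaMax B i) * (diagEntry B j - betaMax B j) := h3
        _ = (diagEntry B₁ i - betaMax B₁ i) * (diagEntry B₁ j - betaMax B₁ j) := by
            rw [h1, h2]
  · apply Finset.card_lt_card
    constructor
    · intro i hi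
      by_contra hc
      have h1 : betaMax B₁ i = betaMax B i := hbeta_nonJ i hc
      have h2 : 0 < betaMax B₁ i := by
        have := Finset.mem_filter.mp hi
        exact this.2
      rw [h1] at h2
      exact hc ((hJmem i).mpr h2)
    · intro hc
      obtain ⟨i₀, hi₀, hEq⟩ := Finset.exists_mem_eq_inf' hne (betaMax B)
      have h1 : betaMax B₁ i₀ = 0 := by
        rw [hbeta_J i₀ hi₀, hvdef, ← hEq]; ring
      have h2 : i₀ ∈ Jset B₁ := hc hi₀
      have h3 : 0 < betaMax B₁ i₀ := (Finset.mem_filter.mp h2).2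
      rw [h1] at h3
      exact lt_irrefl 0 h3

lemma main_aux (hm : 0 < m) (N : ℕ) : ∀ B : (Fin m → Fin n) → ℝ,
    (Jset B).card ≤ N → IsSymmetricTensor B → IsDoubleBTensor B →
    IsZTensor B ∨
      ∃ (s : ℕ), 0 < s ∧
        ∃ (h : Fin s → ℝ) (J : Fin s → Finset (Fin n)) (M : (Fin m → Fin n) → ℝ),
          (∀ k, 0 < h k) ∧ IsSymmetricTensor M ∧ IsZTensor M ∧
            IsDoubleBTensor M ∧
            ∀ α, B α = M α + ∑ k, h k * epsTensor m n (J k) α := by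
  induction N with
  | zero =>
    intro B hcard hsym hB
    left
    exact z_of_Jset_empty hm (Finset.card_eq_zero.mp (Nat.le_zero.mp hcard))
  | succ N ih =>
    intro B hcard hsym hB
    by_cases hJ : Jset B = ∅
    · left; exact z_of_Jset_empty hm hJ
    · obtain ⟨hv, hvpos, hsym1, hB1, hcard1⟩ :=
        step hm hsym hB (Finset.nonempty_iff_ne_empty.mpr hJ)
      set B₁ : (Fin m → Fin n) → ℝ := fun α => B α - hv * epsTensor m n (Jset B) α
        with hB₁def
      have hc1 : (Jset B₁).card ≤ N := by omega
      rcases ih B₁ hc1 hsym1 hB1 with hz | ⟨s, hs, hf, Jf, M, hfp, hMsym, hMz, hMdb, heq⟩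
      · right
        refine ⟨1, one_pos, fun _ => hv, fun _ => Jset B, B₁,
          fun _ => hvpos, hsym1, hz, hB1, fun α => ?_⟩
        rw [Fin.sum_univ_one]
        show B α = (B α - hv * epsTensor m n (Jset B) α) + hv * epsTensor m n (Jset B) α
        ring
      · right
        refine ⟨s + 1, Nat.succ_pos _, Fin.cons hv hf, Fin.cons (Jset B) Jf, M,
          ?_, hMsym, hMz, hMdb, fun α => ?_⟩
        · intro k
          refine Fin.cases ?_ ?_ k
          · exact hvpos
          · exact fun j => hfp j
        · rw [Fin.sum_univ_succ]
          simp only [Fin.cons_zero, Fin.cons_succ]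
          have h2 := heq α
          have h3 : B₁ α = B α - hv * epsTensor m n (Jset B) α := rfl
          rw [h3] at h2
          linarith

end Main

/-- a symmetric double B-tensor is either a Z-tensor, or it is the sum
of a symmetric Z-tensor which is a double B-tensor and a positive combination of
partially all one tensors. -/
theorem stmt13 (m n : ℕ) (hm : 2 ≤ m) (hn : 2 ≤ n) (B : (Fin m → Fin n) → ℝ)
    (hsym : IsSymmetricTensor B) (hB : IsDoubleBTensor B) :
    IsZTensor B ∨
      ∃ (s : ℕ), 0 < s ∧
        ∃ (h : Fin s → ℝ) (J : Fin s → Finset (Fin n)) (M : (Fin m → Fin n) → ℝ),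
          (∀ k, 0 < h k) ∧ IsSymmetricTensor M ∧ IsZTensor M ∧
            IsDoubleBTensor M ∧
            ∀ α, B α = M α + ∑ k, h k * epsTensor m n (J k) α := by
  exact main_aux (by omega) ((Jset B).card) B le_rfl hsym hB
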